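/- arXiv:0805.1463 — 5 statements merged into one kernel-verified Lean document; each statement's English description precedes it below -/
import Mathlib

section
/- Let n ≥ 1. Consider any classical protocol for n-bit parity-oblivious multiplexing: a finite message set M, an encoding given by probabilities p(m|x) ≥ 0 with ∑_{m∈M} p(m|x) = 1 for every x ∈ {0,1}^n, and a stochastic decoding given by probabilities q(b|m,y) ≥ 0 with q(0|m,y) + q(1|m,y) = 1 for every m ∈ M and y ∈ {1,…,n}. Suppose the encoding is parity-oblivious: for every s ∈ Par and every m ∈ M, ∑_{x : x·s=0} p(m|x) = ∑_{x : x·s=1} p(m|x). Then the probability of success, (1/(2^n · n)) · ∑_{y=1}^{n} ∑_{x∈{0,1}^n} ∑_{m∈M} p(m|x) · q(x_y|m,y), is at most (n+1)/(2n). -/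
/-- The inner product modulo 2 of two n-bit strings: x·s = ⊕ᵢ xᵢsᵢ. -/
def dotZ2 {n : ℕ} (x s : Fin n → ZMod 2) : ZMod 2 := ∑ i, x i * s i

/-- The Hamming weight of an n-bit string. -/
def hamWt {n : ℕ} (s : Fin n → ZMod 2) : ℕ :=
  (Finset.univ.filter (fun i => s i = 1)).card

def chi (b : ZMod 2) : ℝ := if b = 0 then 1 else -1

lemma zmod2_cases (b : ZMod 2) : b = 0 ∨ b = 1 := by revert b; decide

lemma chi_add (a b : ZMod 2) : chi (a + b) = chi a * chi b := by
  have h2 : (1 + 1 : ZMod 2) = 0 := by decide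
  rcases zmod2_cases a with h | h <;> rcases zmod2_cases b with h' | h' <;>
    subst h <;> subst h' <;> simp [chi, h2]

lemma chi_sum {ι : Type*} (t : Finset ι) (f : ι → ZMod 2) :
    chi (∑ i ∈ t, f i) = ∏ i ∈ t, chi (f i) := by
  induction t using Finset.cons_induction with
  | empty => simp [chi]
  | cons a t ha ih => rw [Finset.sum_cons, Finset.prod_cons, chi_add, ih]

lemma sum_zmod2 (f : ZMod 2 → ℝ) : ∑ b, f b = f 0 + f 1 := by
  rw [show (Finset.univ : Finset (ZMod 2)) = {0, 1} from by decide]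
  simp

lemma orthogonality {n : ℕ} (w : Fin n → ZMod 2) :
    ∑ s : Fin n → ZMod 2, chi (dotZ2 w s) = if w = 0 then (2 : ℝ) ^ n else 0 := by
  have key : ∑ s : Fin n → ZMod 2, chi (dotZ2 w s) = ∏ i, (1 + chi (w i)) := by
    rw [show ∏ i, (1 + chi (w i)) = ∏ i, ∑ b : ZMod 2, chi (w i * b) from by
      refine Finset.prod_congr rfl fun i _ => ?_
      rw [sum_zmod2]; simp [chi]]
    rw [Fintype.prod_sum]
    exact Finset.sum_congr rfl fun s _ => by rw [dotZ2, chi_sum]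
  rw [key]
  split_ifs with h
  · subst h; simp [chi]; norm_num
  · obtain ⟨i, hi⟩ : ∃ i, w i ≠ 0 := by
      by_contra hc; push_neg at hc; exact h (funext hc)
    have : w i = 1 := (zmod2_cases (w i)).resolve_left hi
    exact Finset.prod_eq_zero (Finset.mem_univ i) (by simp [this, chi])

lemma fun_add_eq_zero_iff {n : ℕ} (z x : Fin n → ZMod 2) : z + x = 0 ↔ z = x := by
  have h1 : ∀ a b : ZMod 2, a + b = 0 ↔ a = b := by decide
  constructor
  · intro h; funext i; exact (h1 _ _).mp (by simpa using congrFun h i)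
  · rintro rfl; funext i; simpa using (h1 (z i) (z i)).mpr rfl

lemma dot_add_left {n : ℕ} (z x s : Fin n → ZMod 2) :
    dotZ2 (z + x) s = dotZ2 z s + dotZ2 x s := by
  simp [dotZ2, add_mul, Finset.sum_add_distrib]

lemma inversion {n : ℕ} (g : (Fin n → ZMod 2) → ℝ) (x : Fin n → ZMod 2) :
    (2 : ℝ) ^ n * g x = ∑ s : Fin n → ZMod 2,
      (∑ z : Fin n → ZMod 2, g z * chi (dotZ2 z s)) * chi (dotZ2 x s) := by
  have : ∀ s : Fin n → ZMod 2,
      (∑ z : Fin n → ZMod 2, g z * chi (dotZ2 z s)) * chi (dotZ2 x s)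
        = ∑ z : Fin n → ZMod 2, g z * chi (dotZ2 (z + x) s) := by
    intro s
    rw [Finset.sum_mul]
    exact Finset.sum_congr rfl fun z _ => by
      rw [dot_add_left, chi_add, mul_assoc]
  simp_rw [this]
  rw [Finset.sum_comm]
  have : ∀ z : Fin n → ZMod 2,
      ∑ s : Fin n → ZMod 2, g z * chi (dotZ2 (z + x) s)
        = if z = x then g z * 2 ^ n else 0 := by
    intro z
    rw [← Finset.mul_sum, orthogonality]
    by_cases h : z = x
    · simp [h, (fun_add_eq_zero_iff x x).mpr rfl]
    · have h2 : z + x ≠ 0 := fun hc => h ((fun_add_eq_zero_iff z x).mp hc)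
      simp [h, h2]
  simp_rw [this]
  rw [Finset.sum_ite_eq' Finset.univ x (fun z => g z * 2 ^ n)]
  simp [mul_comm]

def delta {n : ℕ} (i : Fin n) : Fin n → ZMod 2 := fun j => if j = i then 1 else 0

lemma delta_inj {n : ℕ} : Function.Injective (delta (n := n)) := by
  intro i j h
  have := congrFun h i
  simp [delta] at this
  by_contra hc
  exact hc this

lemma dot_delta {n : ℕ} (x : Fin n → ZMod 2) (i : Fin n) : dotZ2 x (delta i) = x i := by
  simp [dotZ2, delta, mul_ite]

lemma dot_zero {n : ℕ} (x : Fin n → ZMod 2) : dotZ2 x 0 = 0 := by simp [dotZ2]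

lemma hamWt_le_one_iff {n : ℕ} (s : Fin n → ZMod 2) :
    hamWt s ≤ 1 ↔ s = 0 ∨ ∃ i, s = delta i := by
  constructor
  · intro h
    interval_cases h' : hamWt s
    · left
      have he : Finset.univ.filter (fun i => s i = 1) = ∅ := Finset.card_eq_zero.mp h'
      funext i
      have : s i ≠ 1 := by
        intro hc
        have : i ∈ Finset.univ.filter (fun i => s i = 1) := by simp [hc]
        simp [he] at this
      exact (zmod2_cases (s i)).resolve_right this
    · right
      obtain ⟨i, hi⟩ := Finset.card_eq_one.mp h'
      refine ⟨i, funext fun j => ?_⟩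
      have hmem : ∀ j, s j = 1 ↔ j ∈ Finset.univ.filter (fun i => s i = 1) := by simp
      by_cases hj : j = i
      · subst hj; simp [delta, (hmem j).mpr.mt]
        have : j ∈ Finset.univ.filter (fun i => s i = 1) := by rw [hi]; exact Finset.mem_singleton_self j
        simpa using this
      · have : s j ≠ 1 := by
          intro hc
          have : j ∈ ({i} : Finset (Fin n)) := hi ▸ (hmem j).mp hc
          exact hj (Finset.mem_singleton.mp this)
        simp [delta, hj]
        exact (zmod2_cases (s j)).resolve_right this
  · rintro (rfl | ⟨i, rfl⟩)
    · simp [hamWt]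
    · have : Finset.univ.filter (fun j => delta i j = 1) = {i} := by
        ext j; simp [delta]
      simp [hamWt, this]

lemma delta_ne_zero {n : ℕ} (i : Fin n) : delta i ≠ 0 := by
  intro h
  have := congrFun h i
  simp [delta] at this

lemma key_lemma {n : ℕ} (g : (Fin n → ZMod 2) → ℝ) (hg : ∀ z, 0 ≤ g z)
    (hhat : ∀ s, 2 ≤ hamWt s → ∑ z : Fin n → ZMod 2, g z * chi (dotZ2 z s) = 0) :
    ∑ i : Fin n, |∑ z : Fin n → ZMod 2, g z * chi (z i)| ≤ ∑ z : Fin n → ZMod 2, g z := by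
  set α : Fin n → ℝ := fun i => ∑ z : Fin n → ZMod 2, g z * chi (z i) with hα
  set xs : Fin n → ZMod 2 := fun i => if 0 ≤ α i then 1 else 0 with hxs
  set F : (Fin n → ZMod 2) → ℝ :=
    fun s => (∑ z : Fin n → ZMod 2, g z * chi (dotZ2 z s)) * chi (dotZ2 xs s) with hF
  have h1 : (0:ℝ) ≤ ∑ s : Fin n → ZMod 2, F s := by
    rw [← inversion g xs]
    exact mul_nonneg (by positivity) (hg xs)
  have h2 : ∑ s : Fin n → ZMod 2, F s
      = ∑ s ∈ Finset.univ.filter (fun s => hamWt s ≤ 1), F s := by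
    symm
    apply Finset.sum_filter_of_ne
    intro s _ hFs
    by_contra hc
    push_neg at hc
    exact hFs (by rw [hF]; simp [hhat s hc])
  have h3 : Finset.univ.filter (fun s : Fin n → ZMod 2 => hamWt s ≤ 1)
      = insert 0 (Finset.image delta Finset.univ) := by
    ext s
    simp only [Finset.mem_filter, Finset.mem_univ, true_and, Finset.mem_insert,
      Finset.mem_image]
    rw [hamWt_le_one_iff]
    aesop
  have h0notin : (0 : Fin n → ZMod 2) ∉ Finset.image delta Finset.univ := by
    simp only [Finset.mem_image]
    rintro ⟨i, _, h⟩
    exact delta_ne_zero i h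
  have h4 : ∑ s ∈ Finset.univ.filter (fun s : Fin n → ZMod 2 => hamWt s ≤ 1), F s
      = F 0 + ∑ i : Fin n, F (delta i) := by
    rw [h3, Finset.sum_insert h0notin, Finset.sum_image (fun i _ j _ h => delta_inj h)]
  have hF0 : F 0 = ∑ z : Fin n → ZMod 2, g z := by
    simp [hF, dot_zero, chi]
  have hFd : ∀ i, F (delta i) = -|α i| := by
    intro i
    have : F (delta i) = α i * chi (xs i) := by
      simp only [hF, hα, dot_delta]
    rw [this, hxs]
    by_cases h : 0 ≤ α i
    · simp only [if_pos h]
      rw [abs_of_nonneg h]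
      simp [chi]
    · simp only [if_neg h]
      rw [abs_of_neg (lt_of_not_ge h)]
      simp [chi]
  rw [h2, h4, hF0] at h1
  simp_rw [hFd] at h1
  rw [Finset.sum_neg_distrib] at h1
  linarith

lemma card_strings (n : ℕ) : (Finset.univ : Finset (Fin n → ZMod 2)).card = 2 ^ n := by
  simp [Finset.card_univ]

/-- Any classical protocol for n-bit parity-oblivious multiplexing (finite message
set `M`, parity-oblivious stochastic encoding `p`, stochastic decoding `q`) has
success probability at most (n+1)/(2n). -/
theorem classical_parity_oblivious_multiplexing_bound
    (n : ℕ) (hn : 1 ≤ n) (M : Type) [Fintype M]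
    (p : M → (Fin n → ZMod 2) → ℝ) (q : ZMod 2 → M → Fin n → ℝ)
    (hp_nonneg : ∀ m x, 0 ≤ p m x)
    (hp_sum : ∀ x, ∑ m : M, p m x = 1)
    (hq_nonneg : ∀ b m y, 0 ≤ q b m y)
    (hq_sum : ∀ m y, q 0 m y + q 1 m y = 1)
    (hPO : ∀ s : Fin n → ZMod 2, 2 ≤ hamWt s → ∀ m : M,
      ∑ x ∈ Finset.univ.filter (fun x => dotZ2 x s = 0), p m x
        = ∑ x ∈ Finset.univ.filter (fun x => dotZ2 x s = 1), p m x) :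
    (1 / (2 ^ n * n) : ℝ) *
        ∑ y : Fin n, ∑ x : Fin n → ZMod 2, ∑ m : M, p m x * q (x y) m y
      ≤ (n + 1) / (2 * n) := by
  set d : M → Fin n → ℝ := fun m y => q 0 m y - q 1 m y with hd
  set α : M → Fin n → ℝ := fun m y => ∑ x : Fin n → ZMod 2, p m x * chi (x y) with hα
  -- rewrite decoding probabilities
  have hq : ∀ (b : ZMod 2) m y, q b m y = 1/2 + chi b * d m y / 2 := by
    intro b m y
    rcases zmod2_cases b with h | h <;> subst h <;>
      simp [chi, hd] <;> linarith [hq_sum m y]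
  -- Fourier coefficients vanish for weight ≥ 2
  have hhat : ∀ (m : M) (s : Fin n → ZMod 2), 2 ≤ hamWt s →
      ∑ z : Fin n → ZMod 2, p m z * chi (dotZ2 z s) = 0 := by
    intro m s hs
    have hsplit := Finset.sum_filter_add_sum_filter_not Finset.univ
      (fun z : Fin n → ZMod 2 => dotZ2 z s = 0) (fun z => p m z * chi (dotZ2 z s))
    have e0 : ∑ z ∈ Finset.univ.filter (fun z : Fin n → ZMod 2 => dotZ2 z s = 0),
        p m z * chi (dotZ2 z s)
        = ∑ z ∈ Finset.univ.filter (fun z : Fin n → ZMod 2 => dotZ2 z s = 0), p m z := by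
      refine Finset.sum_congr rfl fun z hz => ?_
      rw [(Finset.mem_filter.mp hz).2]
      simp [chi]
    have hfil : Finset.univ.filter (fun z : Fin n → ZMod 2 => ¬ dotZ2 z s = 0)
        = Finset.univ.filter (fun z : Fin n → ZMod 2 => dotZ2 z s = 1) := by
      ext z
      simp only [Finset.mem_filter, Finset.mem_univ, true_and]
      rcases zmod2_cases (dotZ2 z s) with h | h <;> simp [h]
    have e1 : ∑ z ∈ Finset.univ.filter (fun z : Fin n → ZMod 2 => ¬ dotZ2 z s = 0),
        p m z * chi (dotZ2 z s)
        = -∑ z ∈ Finset.univ.filter (fun z : Fin n → ZMod 2 => dotZ2 z s = 1), p m z := by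
      rw [hfil, ← Finset.sum_neg_distrib]
      refine Finset.sum_congr rfl fun z hz => ?_
      rw [(Finset.mem_filter.mp hz).2]
      simp [chi]
    rw [← hsplit, e0, e1, hPO s hs m]
    ring
  -- key bound per message
  have hkey : ∀ m : M, ∑ y : Fin n, |α m y| ≤ ∑ x : Fin n → ZMod 2, p m x := by
    intro m
    exact key_lemma (p m) (hp_nonneg m) (hhat m)
  -- total mass
  have hmass : ∑ x : Fin n → ZMod 2, ∑ m : M, p m x = (2:ℝ)^n := by
    simp_rw [hp_sum]
    rw [Finset.sum_const, card_strings]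
    simp
  -- rewrite the success sum
  have hS : ∑ y : Fin n, ∑ x : Fin n → ZMod 2, ∑ m : M, p m x * q (x y) m y
      = (n : ℝ) * 2^n / 2 + ∑ y : Fin n, ∑ m : M, d m y * α m y / 2 := by
    have hy : ∀ y : Fin n, ∑ x : Fin n → ZMod 2, ∑ m : M, p m x * q (x y) m y
        = (2:ℝ)^n / 2 + ∑ m : M, d m y * α m y / 2 := by
      intro y
      have step : ∀ (x : Fin n → ZMod 2) (m : M),
          p m x * q (x y) m y = p m x / 2 + p m x * chi (x y) * d m y / 2 := by
        intro x m
        rw [hq (x y) m y]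
        ring
      simp_rw [step, Finset.sum_add_distrib]
      congr 1
      · simp_rw [← Finset.sum_div, hp_sum]
        rw [Finset.sum_const, card_strings]
        simp
      · rw [Finset.sum_comm]
        refine Finset.sum_congr rfl fun m _ => ?_
        rw [hα, ← Finset.sum_div, ← Finset.sum_mul]
        ring
    simp_rw [hy]
    rw [Finset.sum_add_distrib, Finset.sum_const]
    simp [Finset.card_univ]
    ring
  -- bound the correlation term
  have habs : ∑ y : Fin n, ∑ m : M, d m y * α m y / 2 ≤ (2:ℝ)^n / 2 := by
    have step1 : ∑ y : Fin n, ∑ m : M, d m y * α m y / 2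
        ≤ ∑ y : Fin n, ∑ m : M, |α m y| / 2 := by
      refine Finset.sum_le_sum fun y _ => Finset.sum_le_sum fun m _ => ?_
      have hdle : |d m y| ≤ 1 := by
        rw [abs_le, hd]
        constructor <;> simp <;>
          [linarith [hq_nonneg 0 m y, hq_sum m y]; linarith [hq_nonneg 1 m y, hq_sum m y]]
      have : d m y * α m y ≤ |α m y| := by
        calc d m y * α m y ≤ |d m y * α m y| := le_abs_self _
          _ = |d m y| * |α m y| := abs_mul _ _
          _ ≤ 1 * |α m y| := by
              exact mul_le_mul_of_nonneg_right hdle (abs_nonneg _)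
          _ = |α m y| := one_mul _
      have h2 : (0:ℝ) ≤ 2 := by norm_num
      exact div_le_div_of_nonneg_right this h2
    have step2 : ∑ y : Fin n, ∑ m : M, |α m y| / 2 ≤ (2:ℝ)^n / 2 := by
      rw [Finset.sum_comm]
      have : ∑ m : M, ∑ y : Fin n, |α m y| / 2
          = (∑ m : M, ∑ y : Fin n, |α m y|) / 2 := by
        rw [Finset.sum_div]
        exact Finset.sum_congr rfl fun m _ => by rw [Finset.sum_div]
      rw [this]
      have : ∑ m : M, ∑ y : Fin n, |α m y| ≤ (2:ℝ)^n := by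
        calc ∑ m : M, ∑ y : Fin n, |α m y|
            ≤ ∑ m : M, ∑ x : Fin n → ZMod 2, p m x := Finset.sum_le_sum fun m _ => hkey m
          _ = ∑ x : Fin n → ZMod 2, ∑ m : M, p m x := by rw [Finset.sum_comm]
          _ = (2:ℝ)^n := hmass
      linarith
    linarith
  -- final arithmetic
  have hnpos : (0:ℝ) < n := by exact_mod_cast hn
  have h2pos : (0:ℝ) < 2^n := by positivity
  have hSle : ∑ y : Fin n, ∑ x : Fin n → ZMod 2, ∑ m : M, p m x * q (x y) m y
      ≤ (n : ℝ) * 2^n / 2 + 2^n / 2 := by rw [hS]; linarith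
  have hfinal : (1 / (2 ^ n * n) : ℝ) *
      ∑ y : Fin n, ∑ x : Fin n → ZMod 2, ∑ m : M, p m x * q (x y) m y
      ≤ (1 / (2 ^ n * n) : ℝ) * ((n : ℝ) * 2^n / 2 + 2^n / 2) :=
    mul_le_mul_of_nonneg_left hSle (by positivity)
  refine hfinal.trans (le_of_eq ?_)
  field_simp
end

section
/- Let n ≥ 1. There exists a classical protocol for n-bit parity-oblivious multiplexing achieving success probability exactly (n+1)/(2n): namely, a finite message set M, an encoding p(m|x) ≥ 0 with ∑_{m∈M} p(m|x) = 1 which is parity-oblivious (for every s ∈ Par and every m ∈ M, ∑_{x : x·s=0} p(m|x) = ∑_{x : x·s=1} p(m|x)), and a stochastic decoding q(b|m,y) ≥ 0 with q(0|m,y) + q(1|m,y) = 1, such that (1/(2^n · n)) · ∑_{y=1}^{n} ∑_{x∈{0,1}^n} ∑_{m∈M} p(m|x) · q(x_y|m,y) = (n+1)/(2n). For instance, take M = {0,1}, p(m|x) = δ_{m,x_1}, q(b|m,1) = δ_{b,m}, and q(b|m,y) = 1/2 for y ≠ 1. -/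
lemma z2_aux (a : ZMod 2) : a + 1 + 1 = a := by revert a; decide

lemma dot_update {n : ℕ} (x s : Fin n → ZMod 2) (j : Fin n) (hj : s j = 1) :
    dotZ2 (Function.update x j (x j + 1)) s = dotZ2 x s + 1 := by
  unfold dotZ2
  have : ∀ i, Function.update x j (x j + 1) i * s i
      = x i * s i + (if i = j then s i else 0) := by
    intro i
    by_cases h : i = j
    · subst h; simp [Function.update_self]; ring
    · simp [Function.update_of_ne h, h]
  rw [Finset.sum_congr rfl (fun i _ => this i), Finset.sum_add_distrib,
    Finset.sum_ite_eq' Finset.univ j s]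
  simp [hj]

lemma upd_invol {n : ℕ} (x : Fin n → ZMod 2) (j : Fin n) :
    Function.update (Function.update x j (x j + 1)) j
      (Function.update x j (x j + 1) j + 1) = x := by
  funext i
  by_cases h : i = j
  · subst h; simp [Function.update_self, z2_aux]
  · simp [Function.update_of_ne h]

/-- There is a classical protocol for n-bit parity-oblivious multiplexing — a finite
message set `M`, a parity-oblivious stochastic encoding `p`, and a stochastic
decoding `q` — whose success probability is exactly (n+1)/(2n).  (For instance,
M = {0,1}, p(m|x) = δ_{m,x₁}, q(b|m,1) = δ_{b,m}, q(b|m,y) = 1/2 for y ≠ 1.) -/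
theorem classical_parity_oblivious_multiplexing_optimum
    (n : ℕ) (hn : 1 ≤ n) :
    ∃ (M : Type) (inst : Fintype M) (p : M → (Fin n → ZMod 2) → ℝ)
      (q : ZMod 2 → M → Fin n → ℝ),
      (∀ m x, 0 ≤ p m x) ∧
      (∀ x, ∑ m ∈ (@Finset.univ M inst), p m x = 1) ∧
      (∀ s : Fin n → ZMod 2, 2 ≤ hamWt s → ∀ m : M,
        ∑ x ∈ Finset.univ.filter (fun x => dotZ2 x s = 0), p m x
          = ∑ x ∈ Finset.univ.filter (fun x => dotZ2 x s = 1), p m x) ∧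
      (∀ b m y, 0 ≤ q b m y) ∧
      (∀ m y, q 0 m y + q 1 m y = 1) ∧
      (1 / (2 ^ n * n) : ℝ) *
          ∑ y : Fin n, ∑ x : Fin n → ZMod 2,
            ∑ m ∈ (@Finset.univ M inst), p m x * q (x y) m y
        = (n + 1) / (2 * n) := by
  have hn0 : 0 < n := hn
  set y₀ : Fin n := ⟨0, hn0⟩ with hy₀
  refine ⟨ZMod 2, inferInstance,
    fun m x => if x y₀ = m then 1 else 0,
    fun b m y => if y = y₀ then (if b = m then 1 else 0) else 1/2,
    ?_, ?_, ?_, ?_, ?_, ?_⟩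
  · intro m x; dsimp only; split <;> norm_num
  · intro x; simp [Finset.sum_ite_eq]
  · -- parity obliviousness
    intro s hs m
    unfold hamWt at hs
    obtain ⟨a, ha, b, hb, hab⟩ := Finset.one_lt_card.mp (by omega :
      1 < (Finset.univ.filter (fun i => s i = 1)).card)
    simp only [Finset.mem_filter, Finset.mem_univ, true_and] at ha hb
    obtain ⟨j, hj1, hjy⟩ : ∃ j, s j = 1 ∧ j ≠ y₀ := by
      by_cases h : a = y₀
      · exact ⟨b, hb, fun hb' => hab (by rw [h, hb'])⟩
      · exact ⟨a, ha, h⟩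
    refine Finset.sum_nbij' (i := fun x => Function.update x j (x j + 1))
      (j := fun x => Function.update x j (x j + 1)) ?_ ?_ ?_ ?_ ?_
    · intro x hx
      simp only [Finset.mem_filter, Finset.mem_univ, true_and] at hx ⊢
      rw [dot_update x s j hj1, hx]; decide
    · intro x hx
      simp only [Finset.mem_filter, Finset.mem_univ, true_and] at hx ⊢
      rw [dot_update x s j hj1, hx]; decide
    · intro x _; exact upd_invol x j
    · intro x _; exact upd_invol x j
    · intro x _
      dsimp only
      rw [Function.update_of_ne (Ne.symm hjy)]
  · intro b m y; dsimp only
    split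
    · split <;> norm_num
    · norm_num
  · intro m y; dsimp only
    by_cases h : y = y₀
    · have hm : m = 0 ∨ m = 1 := by revert m; decide
      rcases hm with hm | hm <;> simp [h, hm]
    · simp [h]; norm_num
  · -- success probability
    have hinner : ∀ (y : Fin n) (x : Fin n → ZMod 2),
        ∑ m : ZMod 2, (if x y₀ = m then (1:ℝ) else 0) *
          (if y = y₀ then (if x y = m then 1 else 0) else 1/2)
        = if y = y₀ then 1 else 1/2 := by
      intro y x
      rw [Finset.sum_eq_single (x y₀)]
      · by_cases h : y = y₀ <;> simp [h]
      · intro b _ hb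
        simp [Ne.symm hb]
      · simp
    have hsum : ∑ y : Fin n, ∑ x : Fin n → ZMod 2,
        ∑ m : ZMod 2, (if x y₀ = m then (1:ℝ) else 0) *
          (if y = y₀ then (if x y = m then 1 else 0) else 1/2)
        = 2^n * (1 + ((n:ℝ) - 1) * (1/2)) := by
      calc ∑ y : Fin n, ∑ x : Fin n → ZMod 2,
          ∑ m : ZMod 2, (if x y₀ = m then (1:ℝ) else 0) *
            (if y = y₀ then (if x y = m then 1 else 0) else 1/2)
          = ∑ y : Fin n, (2:ℝ)^n * (if y = y₀ then 1 else 1/2) := by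
            refine Finset.sum_congr rfl fun y _ => ?_
            rw [Finset.sum_congr rfl fun x _ => hinner y x, Finset.sum_const]
            simp [Finset.card_univ]
        _ = 2^n * (1 + ((n:ℝ)-1) * (1/2)) := by
            rw [← Finset.mul_sum]
            congr 1
            have h12 : ∀ i : Fin n, (if i = y₀ then (1:ℝ) else 1/2)
                = 1/2 + (if i = y₀ then 1/2 else 0) := by
              intro i; split <;> norm_num
            rw [Finset.sum_congr rfl fun i _ => h12 i, Finset.sum_add_distrib,
              Finset.sum_const, Finset.sum_ite_eq' Finset.univ y₀ (fun _ => (1/2:ℝ))]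
            simp [Finset.card_univ]
            ring
    dsimp only
    rw [hsum]
    have h2 : (2:ℝ)^n ≠ 0 := by positivity
    have hnn : (n:ℝ) ≠ 0 := Nat.cast_ne_zero.mpr (by omega)
    field_simp
    ring
end

section
/- Let n ≥ 1, let (Λ, 𝒜) be a measurable space, let μ_x be a probability measure on Λ for each x ∈ {0,1}^n (the hidden-variable distribution of the preparation P_x), and for each y ∈ {1,…,n} let r_y : Λ → [0,1] be a measurable function (the probability that the measurement M_y yields outcome 0 on hidden state λ). Suppose parity-obliviousness holds at the level of the hidden variables: for every s ∈ Par, the measures ∑_{x : x·s=0} μ_x and ∑_{x : x·s=1} μ_x are equal. Then the probability of success, (1/(2^n · n)) · ∑_{y=1}^{n} ∑_{x∈{0,1}^n} ∫_Λ [if x_y = 0 then r_y(λ) else 1 − r_y(λ)] dμ_x(λ), is at most (n+1)/(2n). -/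
open MeasureTheory
open scoped ENNReal NNReal

namespace POMAux

noncomputable def sgn (b : ZMod 2) : ℝ := if b = 0 then 1 else -1

lemma zmod2_cases : ∀ a : ZMod 2, a = 0 ∨ a = 1 := by decide

lemma sgn_zero : sgn 0 = 1 := if_pos rfl

lemma sgn_add (a b : ZMod 2) : sgn (a + b) = sgn a * sgn b := by
  have h2 : (1 + 1 : ZMod 2) = 0 := by decide
  have h10 : (1 : ZMod 2) ≠ 0 := by decide
  rcases zmod2_cases a with ha | ha <;> rcases zmod2_cases b with hb | hb <;>
    subst ha <;> subst hb <;> simp [sgn, h2, h10]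

lemma sgn_sum {ι : Type*} (A : Finset ι) (f : ι → ZMod 2) :
    sgn (∑ i ∈ A, f i) = ∏ i ∈ A, sgn (f i) := by
  induction A using Finset.cons_induction with
  | empty => simp [sgn]
  | cons a A ha ih => rw [Finset.sum_cons, Finset.prod_cons, sgn_add, ih]

lemma orth {n : ℕ} (w : Fin n → ZMod 2) :
    ∑ s : Fin n → ZMod 2, sgn (dotZ2 w s) = if w = 0 then (2 ^ n : ℝ) else 0 := by
  have h1 : ∀ s : Fin n → ZMod 2, sgn (dotZ2 w s) = ∏ i, sgn (w i * s i) :=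
    fun s => sgn_sum _ _
  simp_rw [h1]
  have hps := Finset.prod_univ_sum (fun _ : Fin n => (Finset.univ : Finset (ZMod 2)))
    (fun i b => sgn (w i * b))
  rw [Fintype.piFinset_univ] at hps
  rw [← hps]
  have h2 : ∀ i, ∑ b : ZMod 2, sgn (w i * b) = 1 + sgn (w i) := by
    intro i
    have huniv : (Finset.univ : Finset (ZMod 2)) = {0, 1} := by decide
    rw [huniv, Finset.sum_insert (by decide), Finset.sum_singleton, mul_zero, mul_one, sgn_zero]
  simp_rw [h2]
  by_cases hw : w = 0
  · subst hw
    rw [if_pos rfl]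
    simp [sgn_zero, Pi.zero_apply]
    norm_num
  · rw [if_neg hw]
    obtain ⟨i, hi⟩ : ∃ i, w i ≠ 0 := by
      by_contra h
      push_neg at h
      exact hw (funext h)
    apply Finset.prod_eq_zero (Finset.mem_univ i)
    have hw1 : w i = 1 := (zmod2_cases (w i)).resolve_left hi
    rw [hw1]
    simp [sgn]

def e {n : ℕ} (y : Fin n) : Fin n → ZMod 2 := fun i => if i = y then 1 else 0

lemma dot_e {n : ℕ} (x : Fin n → ZMod 2) (y : Fin n) : dotZ2 x (e y) = x y := by
  simp [dotZ2, e, mul_ite, mul_one, mul_zero, Finset.sum_ite_eq']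

lemma e_ne_zero {n : ℕ} (y : Fin n) : e y ≠ 0 := by
  intro h
  have := congrFun h y
  simp [e] at this

lemma e_inj {n : ℕ} : Function.Injective (e (n := n)) := by
  intro a b h
  by_contra hab
  have h1 := congrFun h a
  simp [e, hab] at h1

lemma hamWt_e {n : ℕ} (y : Fin n) : hamWt (e y) = 1 := by
  have h : Finset.univ.filter (fun i => e y i = 1) = {y} := by
    ext i
    by_cases h : i = y <;> simp [e, h]
  rw [hamWt, h, Finset.card_singleton]

lemma low_mem {n : ℕ} (s : Fin n → ZMod 2) (h : hamWt s ≤ 1) :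
    s ∈ insert (0 : Fin n → ZMod 2) (Finset.univ.image e) := by
  have hcase : hamWt s = 0 ∨ hamWt s = 1 := by omega
  rcases hcase with h0 | h1
  · have hf : Finset.univ.filter (fun i => s i = 1) = ∅ := Finset.card_eq_zero.mp h0
    have : s = 0 := by
      funext i
      have : i ∉ Finset.univ.filter (fun i => s i = 1) := by simp [hf]
      simp at this
      exact (zmod2_cases (s i)).resolve_right this
    simp [this]
  · obtain ⟨y, hy⟩ := Finset.card_eq_one.mp h1
    have hs : s = e y := by
      funext i
      by_cases hiy : i = y
      · subst hiy
        have : i ∈ Finset.univ.filter (fun j => s j = 1) := by rw [hy]; simp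
        simp at this
        simp [e, this]
      · have : i ∉ Finset.univ.filter (fun j => s j = 1) := by rw [hy]; simp [hiy]
        simp at this
        have h0 : s i = 0 := (zmod2_cases (s i)).resolve_right this
        simp [e, hiy, h0]
    rw [hs]
    exact Finset.mem_insert_of_mem (Finset.mem_image_of_mem _ (Finset.mem_univ y))

lemma dot_add_left {n : ℕ} (a b s : Fin n → ZMod 2) :
    dotZ2 (a + b) s = dotZ2 a s + dotZ2 b s := by
  simp [dotZ2, add_mul, Finset.sum_add_distrib]

lemma pointwise {n : ℕ} (P : (Fin n → ZMod 2) → ℝ) (t : Fin n → ℝ)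
    (hP0 : ∀ x, 0 ≤ P x) (hP1 : ∑ x, P x = 1)
    (hPar : ∀ s : Fin n → ZMod 2, 2 ≤ hamWt s →
      ∑ x ∈ Finset.univ.filter (fun x => dotZ2 x s = 0), P x
        = ∑ x ∈ Finset.univ.filter (fun x => dotZ2 x s = 1), P x)
    (ht0 : ∀ y, 0 ≤ t y) (ht1 : ∀ y, t y ≤ 1) :
    ∑ y : Fin n, ∑ x : Fin n → ZMod 2, P x * (if x y = 0 then t y else 1 - t y)
      ≤ (n + 1) / 2 := by
  classical
  set c : Fin n → ℝ := fun y => ∑ x, sgn (x y) * P x with hc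
  -- signed sums vanish on weight ≥ 2
  have hsgn0 : ∀ s : Fin n → ZMod 2, 2 ≤ hamWt s → ∑ x, sgn (dotZ2 x s) * P x = 0 := by
    intro s hs
    rw [← Finset.sum_filter_add_sum_filter_not Finset.univ (fun x => dotZ2 x s = 0)]
    have hA : ∑ x ∈ Finset.univ.filter (fun x => dotZ2 x s = 0), sgn (dotZ2 x s) * P x
        = ∑ x ∈ Finset.univ.filter (fun x => dotZ2 x s = 0), P x := by
      apply Finset.sum_congr rfl
      intro x hx
      rw [Finset.mem_filter] at hx
      rw [hx.2, sgn_zero, one_mul]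
    have hfilter : Finset.univ.filter (fun x : Fin n → ZMod 2 => ¬ dotZ2 x s = 0)
        = Finset.univ.filter (fun x => dotZ2 x s = 1) := by
      apply Finset.filter_congr
      intro x _
      rcases zmod2_cases (dotZ2 x s) with h | h <;> simp [h]
    have hB : ∑ x ∈ Finset.univ.filter (fun x : Fin n → ZMod 2 => ¬ dotZ2 x s = 0),
          sgn (dotZ2 x s) * P x
        = - ∑ x ∈ Finset.univ.filter (fun x => dotZ2 x s = 1), P x := by
      rw [hfilter, ← Finset.sum_neg_distrib]
      apply Finset.sum_congr rfl
      intro x hx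
      rw [Finset.mem_filter] at hx
      rw [hx.2]
      simp [sgn]
    rw [hA, hB, hPar s hs]
    ring
  -- key inversion identity
  have key : ∀ z : Fin n → ZMod 2, (2 ^ n : ℝ) * P z = 1 + ∑ y, sgn (z y) * c y := by
    intro z
    have hswap : ∑ s : Fin n → ZMod 2, sgn (dotZ2 z s) * (∑ x, sgn (dotZ2 x s) * P x)
        = (2 ^ n : ℝ) * P z := by
      have h1 : ∀ s : Fin n → ZMod 2, sgn (dotZ2 z s) * (∑ x, sgn (dotZ2 x s) * P x)
          = ∑ x, sgn (dotZ2 (z + x) s) * P x := by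
        intro s
        rw [Finset.mul_sum]
        apply Finset.sum_congr rfl
        intro x _
        rw [dot_add_left, sgn_add]
        ring
      simp_rw [h1]
      rw [Finset.sum_comm]
      have h2 : ∀ x : Fin n → ZMod 2, ∑ s : Fin n → ZMod 2, sgn (dotZ2 (z + x) s) * P x
          = (if z + x = 0 then (2 ^ n : ℝ) else 0) * P x := by
        intro x
        rw [← Finset.sum_mul, orth]
      simp_rw [h2]
      have h3 : ∀ x : Fin n → ZMod 2, z + x = 0 ↔ x = z := by
        intro x
        constructor
        · intro h
          funext i
          have := congrFun h i
          have hz : ∀ a b : ZMod 2, a + b = 0 → b = a := by decide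
          exact hz _ _ this
        · intro h
          subst h
          funext i
          have hz : ∀ a : ZMod 2, a + a = 0 := by decide
          exact hz _
      have h4 : ∀ x : Fin n → ZMod 2,
          (if z + x = 0 then (2 ^ n : ℝ) else 0) * P x
            = if x = z then (2 ^ n : ℝ) * P x else 0 := by
        intro x
        by_cases h : x = z
        · rw [if_pos ((h3 x).mpr h), if_pos h]
        · rw [if_neg (fun hh => h ((h3 x).mp hh)), if_neg h, zero_mul]
      simp_rw [h4]
      rw [Finset.sum_ite_eq' Finset.univ z]
      simp
    rw [← hswap]
    have hT : ∑ s : Fin n → ZMod 2, sgn (dotZ2 z s) * (∑ x, sgn (dotZ2 x s) * P x)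
        = ∑ s ∈ insert (0 : Fin n → ZMod 2) (Finset.univ.image e),
            sgn (dotZ2 z s) * (∑ x, sgn (dotZ2 x s) * P x) := by
      refine (Finset.sum_subset (Finset.subset_univ _) ?_).symm
      intro s _ hs
      have h2 : 2 ≤ hamWt s := by
        by_contra h
        exact hs (low_mem s (by omega))
      rw [hsgn0 s h2, mul_zero]
    rw [hT]
    have h0mem : (0 : Fin n → ZMod 2) ∉ Finset.univ.image e := by
      intro h
      obtain ⟨y, _, hy⟩ := Finset.mem_image.mp h
      exact e_ne_zero y hy
    rw [Finset.sum_insert h0mem, Finset.sum_image (fun a _ b _ h => e_inj h)]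
    have hdot0 : ∀ x : Fin n → ZMod 2, dotZ2 x 0 = 0 := by
      intro x
      simp [dotZ2]
    have hterm0 : sgn (dotZ2 z 0) * (∑ x, sgn (dotZ2 x 0) * P x) = 1 := by
      simp_rw [hdot0, sgn_zero, one_mul]
      exact hP1
    rw [hterm0]
    congr 1
    apply Finset.sum_congr rfl
    intro y _
    rw [dot_e]
    congr 1
    apply Finset.sum_congr rfl
    intro x _
    rw [dot_e]
  -- sum of |c y| is at most 1
  have habs : ∑ y, |c y| ≤ 1 := by
    set z : Fin n → ZMod 2 := fun y => if 0 < c y then 1 else 0 with hz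
    have hsz : ∀ y, sgn (z y) * c y = -|c y| := by
      intro y
      by_cases h : 0 < c y
      · have : z y = 1 := by simp [hz, h]
        rw [this]
        have h10 : (1 : ZMod 2) ≠ 0 := by decide
        simp [sgn, h10, abs_of_pos h]
      · have : z y = 0 := by simp [hz, h]
        rw [this, sgn_zero, one_mul, abs_of_nonpos (le_of_not_gt h)]
        ring
    have h0 : (0 : ℝ) ≤ (2 ^ n : ℝ) * P z := mul_nonneg (by positivity) (hP0 z)
    rw [key z] at h0
    simp_rw [hsz] at h0
    rw [Finset.sum_neg_distrib] at h0
    linarith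
  -- per-measurement computation
  have hyform : ∀ y, ∑ x : Fin n → ZMod 2, P x * (if x y = 0 then t y else 1 - t y)
      = 1 / 2 + (t y - 1 / 2) * c y := by
    intro y
    have hx : ∀ x : Fin n → ZMod 2, P x * (if x y = 0 then t y else 1 - t y)
        = P x * (1 / 2) + (t y - 1 / 2) * (sgn (x y) * P x) := by
      intro x
      by_cases h : x y = 0 <;> simp [sgn, h] <;> ring
    simp_rw [hx]
    rw [Finset.sum_add_distrib, ← Finset.sum_mul, hP1, ← Finset.mul_sum]
    simp only [hc]
    ring
  have hbound : ∀ y, 1 / 2 + (t y - 1 / 2) * c y ≤ 1 / 2 + |c y| / 2 := by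
    intro y
    have h1 : |t y - 1 / 2| ≤ 1 / 2 := by
      rw [abs_le]
      constructor <;> [linarith [ht0 y]; linarith [ht1 y]]
    have h2 : (t y - 1 / 2) * c y ≤ |t y - 1 / 2| * |c y| := by
      calc (t y - 1 / 2) * c y ≤ |(t y - 1 / 2) * c y| := le_abs_self _
        _ = |t y - 1 / 2| * |c y| := abs_mul _ _
    have h3 : |t y - 1 / 2| * |c y| ≤ (1 / 2) * |c y| :=
      mul_le_mul_of_nonneg_right h1 (abs_nonneg _)
    nlinarith
  calc ∑ y : Fin n, ∑ x : Fin n → ZMod 2, P x * (if x y = 0 then t y else 1 - t y)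
      = ∑ y : Fin n, (1 / 2 + (t y - 1 / 2) * c y) := Finset.sum_congr rfl fun y _ => hyform y
    _ ≤ ∑ y : Fin n, (1 / 2 + |c y| / 2) := Finset.sum_le_sum fun y _ => hbound y
    _ = n * (1 / 2) + (∑ y, |c y|) / 2 := by
        rw [Finset.sum_add_distrib, Finset.sum_const, Finset.card_univ, Fintype.card_fin,
          ← Finset.sum_div]
        simp [nsmul_eq_mul]
    _ ≤ n * (1 / 2) + 1 / 2 := by linarith [habs]
    _ = (n + 1) / 2 := by ring

lemma rnDeriv_finset_sum {α ι : Type*} [MeasurableSpace α] (A : Finset ι)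
    (μ : ι → Measure α) (ν : Measure α) [∀ i, IsFiniteMeasure (μ i)] [SigmaFinite ν] :
    (∑ i ∈ A, μ i).rnDeriv ν =ᵐ[ν] fun l => ∑ i ∈ A, (μ i).rnDeriv ν l := by
  classical
  induction A using Finset.cons_induction with
  | empty => simp only [Finset.sum_empty]; exact Measure.rnDeriv_zero ν
  | cons i A hi ih =>
    rw [Finset.sum_cons]
    have h1 := Measure.rnDeriv_add (μ i) (∑ j ∈ A, μ j) ν
    filter_upwards [h1, ih] with l h1l h2l
    rw [h1l, Pi.add_apply, h2l, Finset.sum_cons]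

end POMAux

/-- Noncontextuality inequality: in a hidden-variable model in which
parity-obliviousness holds at the hidden-variable level — for every s of Hamming
weight ≥ 2, the mixture of the distributions μₓ over {x : x·s = 0} equals the
mixture over {x : x·s = 1} — the success probability of n-bit parity-oblivious
multiplexing is at most (n+1)/(2n). Here `r y λ` is the probability that the
measurement Mᵧ yields outcome 0 on the hidden state λ. -/
theorem noncontextual_parity_oblivious_multiplexing_bound
    (n : ℕ) (hn : 1 ≤ n) (Λ : Type*) [MeasurableSpace Λ]
    (μ : (Fin n → ZMod 2) → Measure Λ)
    (hμ : ∀ x, IsProbabilityMeasure (μ x))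
    (r : Fin n → Λ → ℝ)
    (hr_meas : ∀ y, Measurable (r y))
    (hr_nonneg : ∀ y l, 0 ≤ r y l)
    (hr_le_one : ∀ y l, r y l ≤ 1)
    (hPO : ∀ s : Fin n → ZMod 2, 2 ≤ hamWt s →
      ∑ x ∈ Finset.univ.filter (fun x => dotZ2 x s = 0), μ x
        = ∑ x ∈ Finset.univ.filter (fun x => dotZ2 x s = 1), μ x) :
    (1 / (2 ^ n * n) : ℝ) *
        ∑ y : Fin n, ∑ x : Fin n → ZMod 2,
          ∫ l, (if x y = 0 then r y l else 1 - r y l) ∂(μ x)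
      ≤ (n + 1) / (2 * n) := by
  classical
  haveI hμF : ∀ x : Fin n → ZMod 2, IsFiniteMeasure (μ x) := fun x => haveI := hμ x; inferInstance
  set ν : Measure Λ := ∑ x : Fin n → ZMod 2, μ x with hν
  haveI : IsFiniteMeasure ν := by rw [hν]; infer_instance
  have hle : ∀ x, μ x ≤ ν := by
    intro x
    rw [hν]
    refine Measure.le_iff.mpr fun s hs => ?_
    rw [Measure.finset_sum_apply]
    exact Finset.single_le_sum (f := fun i => μ i s) (fun i _ => zero_le) (Finset.mem_univ x)
  have hac : ∀ x, μ x ≪ ν := fun x => (hle x).absolutelyContinuous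
  set q : (Fin n → ZMod 2) → Λ → ℝ := fun x l => ((μ x).rnDeriv ν l).toReal with hq
  have hqm : ∀ x, Measurable (q x) := fun x => (Measure.measurable_rnDeriv _ _).ennreal_toReal
  have hq0 : ∀ x l, 0 ≤ q x l := fun x l => ENNReal.toReal_nonneg
  have hqint : ∀ x, Integrable (q x) ν := fun x => Measure.integrable_toReal_rnDeriv
  have hFmeas : ∀ (y : Fin n) (x : Fin n → ZMod 2),
      Measurable (fun l => (if x y = 0 then r y l else 1 - r y l)) := by
    intro y x
    by_cases h : x y = 0
    · simpa [h] using hr_meas y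
    · simp only [h, ↓reduceIte]; exact measurable_const.sub (hr_meas y)
  have hFabs : ∀ (y : Fin n) (x : Fin n → ZMod 2) (l : Λ),
      |(if x y = 0 then r y l else 1 - r y l)| ≤ 1 := by
    intro y x l
    have h0 := hr_nonneg y l
    have h1 := hr_le_one y l
    by_cases h : x y = 0 <;> simp [h, abs_le] <;> constructor <;> linarith
  -- change of measure for integrals
  have hint : ∀ (x : Fin n → ZMod 2) (g : Λ → ℝ), Measurable g →
      ∫ l, g l ∂(μ x) = ∫ l, q x l * g l ∂ν := by
    intro x g hg
    have h1 : ν.withDensity ((μ x).rnDeriv ν) = μ x := Measure.withDensity_rnDeriv_eq _ _ (hac x)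
    have h2 : ν.withDensity ((μ x).rnDeriv ν)
        = ν.withDensity (fun l => (((μ x).rnDeriv ν l).toNNReal : ℝ≥0∞)) :=
      withDensity_congr_ae ((Measure.rnDeriv_lt_top (μ x) ν).mono
        (fun l hl => (ENNReal.coe_toNNReal hl.ne).symm))
    rw [← h1, h2, integral_withDensity_eq_integral_smul
      ((Measure.measurable_rnDeriv _ _).ennreal_toNNReal) g]
    rfl
  -- a.e. facts about the densities
  have hfin : ∀ᵐ l ∂ν, ∀ x : Fin n → ZMod 2, (μ x).rnDeriv ν l < ⊤ :=
    ae_all_iff.mpr fun x => Measure.rnDeriv_lt_top _ _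
  have hsum1 : ∀ᵐ l ∂ν, ∑ x : Fin n → ZMod 2, q x l = 1 := by
    have h1 : (∑ x : Fin n → ZMod 2, μ x).rnDeriv ν =ᵐ[ν]
        fun l => ∑ x : Fin n → ZMod 2, (μ x).rnDeriv ν l := POMAux.rnDeriv_finset_sum _ _ _
    have h2 : ν.rnDeriv ν =ᵐ[ν] fun _ => 1 := Measure.rnDeriv_self ν
    have h3 : (∑ x : Fin n → ZMod 2, μ x).rnDeriv ν = ν.rnDeriv ν := by rw [← hν]
    filter_upwards [h1, h2, hfin] with l h1l h2l hfl
    have hsum : ∑ x : Fin n → ZMod 2, (μ x).rnDeriv ν l = 1 := by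
      rw [← h1l, h3, h2l]
    calc ∑ x : Fin n → ZMod 2, q x l
        = (∑ x : Fin n → ZMod 2, (μ x).rnDeriv ν l).toReal :=
          (ENNReal.toReal_sum (fun x _ => (hfl x).ne)).symm
      _ = 1 := by rw [hsum]; simp
  have hparAE : ∀ᵐ l ∂ν, ∀ s : Fin n → ZMod 2, 2 ≤ hamWt s →
      ∑ x ∈ Finset.univ.filter (fun x => dotZ2 x s = 0), q x l
        = ∑ x ∈ Finset.univ.filter (fun x => dotZ2 x s = 1), q x l := by
    rw [ae_all_iff]
    intro s
    by_cases hs : 2 ≤ hamWt s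
    · have h0 : (∑ x ∈ Finset.univ.filter (fun x => dotZ2 x s = 0), μ x).rnDeriv ν =ᵐ[ν]
          fun l => ∑ x ∈ Finset.univ.filter (fun x => dotZ2 x s = 0), (μ x).rnDeriv ν l :=
        POMAux.rnDeriv_finset_sum _ _ _
      have h1 : (∑ x ∈ Finset.univ.filter (fun x => dotZ2 x s = 1), μ x).rnDeriv ν =ᵐ[ν]
          fun l => ∑ x ∈ Finset.univ.filter (fun x => dotZ2 x s = 1), (μ x).rnDeriv ν l :=
        POMAux.rnDeriv_finset_sum _ _ _
      have heq : (∑ x ∈ Finset.univ.filter (fun x => dotZ2 x s = 0), μ x).rnDeriv ν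
          = (∑ x ∈ Finset.univ.filter (fun x => dotZ2 x s = 1), μ x).rnDeriv ν :=
        congrArg (fun m : Measure Λ => m.rnDeriv ν) (hPO s hs)
      filter_upwards [h0, h1, hfin] with l h0l h1l hfl
      intro _
      have hE : ∑ x ∈ Finset.univ.filter (fun x => dotZ2 x s = 0), (μ x).rnDeriv ν l
          = ∑ x ∈ Finset.univ.filter (fun x => dotZ2 x s = 1), (μ x).rnDeriv ν l := by
        rw [← h0l, ← h1l, heq]
      calc ∑ x ∈ Finset.univ.filter (fun x => dotZ2 x s = 0), q x l
          = (∑ x ∈ Finset.univ.filter (fun x => dotZ2 x s = 0), (μ x).rnDeriv ν l).toReal :=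
            (ENNReal.toReal_sum (fun x _ => (hfl x).ne)).symm
        _ = (∑ x ∈ Finset.univ.filter (fun x => dotZ2 x s = 1), (μ x).rnDeriv ν l).toReal := by
            rw [hE]
        _ = ∑ x ∈ Finset.univ.filter (fun x => dotZ2 x s = 1), q x l :=
            ENNReal.toReal_sum (fun x _ => (hfl x).ne)
    · filter_upwards with l h
      exact absurd h hs
  -- integrability of the summands
  have hterm_int : ∀ (y : Fin n) (x : Fin n → ZMod 2),
      Integrable (fun l => q x l * (if x y = 0 then r y l else 1 - r y l)) ν := by
    intro y x
    refine (hqint x).mono (((hqm x).mul (hFmeas y x)).aestronglyMeasurable) ?_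
    filter_upwards with l
    rw [Real.norm_eq_abs, Real.norm_eq_abs, abs_mul, abs_of_nonneg (hq0 x l)]
    calc q x l * |(if x y = 0 then r y l else 1 - r y l)| ≤ q x l * 1 :=
          mul_le_mul_of_nonneg_left (hFabs y x l) (hq0 x l)
      _ = q x l := mul_one _
  -- rewrite the success probability as a single integral
  have hS : (∑ y : Fin n, ∑ x : Fin n → ZMod 2,
        ∫ l, (if x y = 0 then r y l else 1 - r y l) ∂(μ x))
      = ∫ l, ∑ y : Fin n, ∑ x : Fin n → ZMod 2,
          q x l * (if x y = 0 then r y l else 1 - r y l) ∂ν := by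
    calc ∑ y : Fin n, ∑ x : Fin n → ZMod 2,
          ∫ l, (if x y = 0 then r y l else 1 - r y l) ∂(μ x)
        = ∑ y : Fin n, ∑ x : Fin n → ZMod 2,
            ∫ l, q x l * (if x y = 0 then r y l else 1 - r y l) ∂ν :=
          Finset.sum_congr rfl fun y _ => Finset.sum_congr rfl fun x _ => hint x _ (hFmeas y x)
      _ = ∑ y : Fin n, ∫ l, ∑ x : Fin n → ZMod 2,
            q x l * (if x y = 0 then r y l else 1 - r y l) ∂ν :=
          Finset.sum_congr rfl fun y _ =>
            (integral_finset_sum _ fun x _ => hterm_int y x).symm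
      _ = ∫ l, ∑ y : Fin n, ∑ x : Fin n → ZMod 2,
            q x l * (if x y = 0 then r y l else 1 - r y l) ∂ν :=
          (integral_finset_sum _ fun y _ =>
            integrable_finset_sum _ fun x _ => hterm_int y x).symm
  -- a.e. pointwise bound
  have hGbound : ∀ᵐ l ∂ν, ∑ y : Fin n, ∑ x : Fin n → ZMod 2,
      q x l * (if x y = 0 then r y l else 1 - r y l) ≤ ((n : ℝ) + 1) / 2 := by
    filter_upwards [hsum1, hparAE] with l h1 h2
    exact POMAux.pointwise (fun x => q x l) (fun y => r y l)
      (fun x => hq0 x l) h1 h2 (fun y => hr_nonneg y l) (fun y => hr_le_one y l)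
  -- total mass of ν
  have hνuniv : (ν Set.univ).toReal = 2 ^ n := by
    have h1 : ν Set.univ = ((2 ^ n : ℕ) : ℝ≥0∞) := by
      rw [hν, Measure.finset_sum_apply]
      simp only [measure_univ, Finset.sum_const, Finset.card_univ, nsmul_eq_mul, mul_one]
      norm_cast
      rw [Fintype.card_fun]
      simp [ZMod.card]
    rw [h1]
    simp
  -- integrate the pointwise bound
  have hIbound : ∫ l, ∑ y : Fin n, ∑ x : Fin n → ZMod 2,
      q x l * (if x y = 0 then r y l else 1 - r y l) ∂ν ≤ ((n : ℝ) + 1) / 2 * 2 ^ n := by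
    have h := integral_mono_ae
      (integrable_finset_sum _ fun y _ => integrable_finset_sum _ fun x _ => hterm_int y x)
      (integrable_const (((n : ℝ) + 1) / 2)) hGbound
    rw [integral_const, measureReal_def, hνuniv, smul_eq_mul] at h
    linarith
  rw [hS]
  have hn0 : (0 : ℝ) < n := by
    have : (1 : ℝ) ≤ n := by exact_mod_cast hn
    linarith
  have h2n : (0 : ℝ) < 2 ^ n := by positivity
  calc (1 / (2 ^ n * n) : ℝ) * ∫ l, ∑ y : Fin n, ∑ x : Fin n → ZMod 2,
        q x l * (if x y = 0 then r y l else 1 - r y l) ∂ν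
      ≤ (1 / (2 ^ n * n) : ℝ) * (((n : ℝ) + 1) / 2 * 2 ^ n) :=
        mul_le_mul_of_nonneg_left hIbound (by positivity)
    _ = ((n : ℝ) + 1) / (2 * n) := by field_simp
end

section
/- For x = (x_1,x_2) ∈ {0,1}^2 define the 2×2 complex matrices ρ_x = (1/2)·(I + ((−1)^{x_1}/√2)·σ_x + ((−1)^{x_2}/√2)·σ_y), and for y ∈ {1,2}, b ∈ {0,1} define Π_{1,b} = (1/2)·(I + (−1)^b·σ_x) and Π_{2,b} = (1/2)·(I + (−1)^b·σ_y). Then each ρ_x is a density matrix (Hermitian, positive semidefinite, trace 1), each Π_{y,b} is an orthogonal projection with Π_{y,0} + Π_{y,1} = I, and for every x ∈ {0,1}^2 and y ∈ {1,2}, Tr(ρ_x · Π_{y,x_y}) = (1/2)·(1 + 1/√2) = cos²(π/8) > 3/4. -/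
open Matrix ComplexOrder

/-- Pauli matrix σx. -/
def pauliX : Matrix (Fin 2) (Fin 2) ℂ := !![0, 1; 1, 0]

/-- Pauli matrix σy. -/
def pauliY : Matrix (Fin 2) (Fin 2) ℂ := !![0, -Complex.I; Complex.I, 0]

/-- Alice's states for quantum 2-bit parity-oblivious multiplexing:
ρ_x = (1/2)(I + ((−1)^{x₁}/√2)σx + ((−1)^{x₂}/√2)σy). -/
noncomputable def ρ₂ (x : Fin 2 → ZMod 2) : Matrix (Fin 2) (Fin 2) ℂ :=
  (1 / 2 : ℂ) •
    (1 + ((-1 : ℂ) ^ (x 0).val / (Real.sqrt 2 : ℝ)) • pauliX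
       + ((-1 : ℂ) ^ (x 1).val / (Real.sqrt 2 : ℝ)) • pauliY)

/-- Bob's measurement effects: Pi_{1,b} = (1/2)(I + (−1)^b σx),
Pi_{2,b} = (1/2)(I + (−1)^b σy). -/
noncomputable def Proj₂ (y : Fin 2) (b : ZMod 2) : Matrix (Fin 2) (Fin 2) ℂ :=
  (1 / 2 : ℂ) • (1 + ((-1 : ℂ) ^ b.val) • (if y = 0 then pauliX else pauliY))

lemma POM_hr2 : ((Real.sqrt 2 : ℝ) : ℂ) ^ 2 = 2 := by
  rw [← Complex.ofReal_pow, Real.sq_sqrt (by norm_num)]; norm_num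

lemma POM_hri : (((Real.sqrt 2 : ℝ) : ℂ))⁻¹ ^ 2 = (2 : ℂ)⁻¹ := by
  rw [inv_pow, POM_hr2]

lemma POM_hsq (n : ℕ) : (-1 : ℂ) ^ (n * 2) = 1 := by
  rw [pow_mul']; norm_num

lemma POM_hsq' (n : ℕ) : (-1 : ℂ) ^ (2 * n) = 1 := by
  rw [pow_mul]; norm_num

lemma POM_rho_herm (x : Fin 2 → ZMod 2) : (ρ₂ x).IsHermitian := by
  have h0 : star ((-1 : ℂ) ^ (x 0).val) = (-1 : ℂ) ^ (x 0).val := by simp [star_pow]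
  have h1 : star ((-1 : ℂ) ^ (x 1).val) = (-1 : ℂ) ^ (x 1).val := by simp [star_pow]
  unfold Matrix.IsHermitian
  ext i j
  fin_cases i <;> fin_cases j <;>
    simp [ρ₂, pauliX, pauliY, conjTranspose_apply, Matrix.one_apply, h0, h1,
      Complex.conj_ofReal] <;> ring

lemma POM_rho_idem (x : Fin 2 → ZMod 2) : ρ₂ x * ρ₂ x = ρ₂ x := by
  ext i j
  fin_cases i <;> fin_cases j <;>
    · simp [ρ₂, pauliX, pauliY, Matrix.mul_apply, Fin.sum_univ_succ, Matrix.one_apply]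
      try ring_nf
      try simp only [POM_hr2, POM_hri, POM_hsq, POM_hsq', Complex.I_sq]
      try ring_nf
      try norm_num

/-- In the quantum protocol for 2-bit parity-oblivious multiplexing, each ρ_x is a
density matrix, each Pi_{y,b} is an orthogonal projection with Pi_{y,0} + Pi_{y,1} = I,
and every input is decoded correctly with probability
Tr(ρ_x Pi_{y,x_y}) = (1/2)(1 + 1/√2) = cos²(π/8) > 3/4. -/
theorem quantum_two_bit_POM_protocol :
    (∀ x : Fin 2 → ZMod 2,
        (ρ₂ x).IsHermitian ∧ (ρ₂ x).PosSemidef ∧ (ρ₂ x).trace = 1) ∧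
    (∀ (y : Fin 2) (b : ZMod 2),
        (Proj₂ y b).IsHermitian ∧ Proj₂ y b * Proj₂ y b = Proj₂ y b) ∧
    (∀ y : Fin 2, Proj₂ y 0 + Proj₂ y 1 = 1) ∧
    (∀ (x : Fin 2 → ZMod 2) (y : Fin 2),
        (ρ₂ x * Proj₂ y (x y)).trace
          = (((1 / 2) * (1 + 1 / Real.sqrt 2) : ℝ) : ℂ)) ∧
    ((1 / 2) * (1 + 1 / Real.sqrt 2) : ℝ) = Real.cos (Real.pi / 8) ^ 2 ∧
    (3 / 4 : ℝ) < (1 / 2) * (1 + 1 / Real.sqrt 2) := by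
  refine ⟨?_, ?_, ?_, ?_, ?_, ?_⟩
  · intro x
    have herm := POM_rho_herm x
    refine ⟨herm, ?_, ?_⟩
    · have h := Matrix.posSemidef_conjTranspose_mul_self (ρ₂ x)
      rwa [herm, POM_rho_idem] at h
    · simp [Matrix.trace, Fin.sum_univ_succ, ρ₂, pauliX, pauliY, Matrix.one_apply]
      ring
  · intro y b
    constructor
    · have h0 : star ((-1 : ℂ) ^ b.val) = (-1 : ℂ) ^ b.val := by simp [star_pow]
      unfold Matrix.IsHermitian
      ext i j
      fin_cases y <;> fin_cases i <;> fin_cases j <;>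
        simp [Proj₂, pauliX, pauliY, conjTranspose_apply, Matrix.one_apply, h0]
    · ext i j
      fin_cases y <;> fin_cases i <;> fin_cases j <;>
        · simp [Proj₂, pauliX, pauliY, Matrix.mul_apply, Fin.sum_univ_succ, Matrix.one_apply]
          try ring_nf
          try simp only [POM_hsq, POM_hsq', Complex.I_sq]
          try norm_num
  · intro y
    have h0 : ((0 : ZMod 2)).val = 0 := rfl
    have h1 : ((1 : ZMod 2)).val = 1 := rfl
    ext i j
    fin_cases y <;> fin_cases i <;> fin_cases j <;>
      simp [Proj₂, pauliX, pauliY, Matrix.one_apply, h0, h1] <;> ring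
  · intro x y
    fin_cases y <;>
      · simp [Matrix.trace, Matrix.mul_apply, Fin.sum_univ_succ, ρ₂, Proj₂, pauliX, pauliY,
          Matrix.one_apply]
        try ring_nf
        try simp only [POM_hr2, POM_hri, POM_hsq, POM_hsq', Complex.I_sq]
        try ring_nf
        try norm_num
  · have h : Real.cos (Real.pi / 8) ^ 2 = 1 / 2 + Real.cos (2 * (Real.pi / 8)) / 2 :=
      Real.cos_sq _
    have h2 : 2 * (Real.pi / 8) = Real.pi / 4 := by ring
    rw [h, h2, Real.cos_pi_div_four]
    have hs : Real.sqrt 2 > 0 := by positivity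
    have hss : Real.sqrt 2 * Real.sqrt 2 = 2 := Real.mul_self_sqrt (by norm_num)
    field_simp
    nlinarith [hss]
  · have hs : Real.sqrt 2 > 0 := by positivity
    have hss : Real.sqrt 2 * Real.sqrt 2 = 2 := Real.mul_self_sqrt (by norm_num)
    have hlt : Real.sqrt 2 < 2 := by nlinarith
    have : (1:ℝ)/2 < 1 / Real.sqrt 2 := by
      rw [div_lt_div_iff₀ (by norm_num) hs]; nlinarith
    linarith
end

section
/- Let d ≥ 1. For each x ∈ {0,1}^2 let ρ_x be a d×d complex density matrix (Hermitian, positive semidefinite, trace 1), and for each y ∈ {1,2} let E_{y,0}, E_{y,1} be d×d Hermitian positive semidefinite matrices with E_{y,0} + E_{y,1} = I (a binary-outcome POVM). Suppose the parity-obliviousness constraint holds: ρ_{00} + ρ_{11} = ρ_{01} + ρ_{10}. Then the probability of success of the resulting protocol for 2-bit parity-oblivious multiplexing, (1/8)·∑_{y∈{1,2}} ∑_{x∈{0,1}^2} Re Tr(ρ_x · E_{y,x_y}), is at most (1/2)·(1 + 1/√2). -/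
open Matrix ComplexOrder

section Aux
variable {n : Type*} [Fintype n] [DecidableEq n]

private lemma POM_trace_re_nonneg {M : Matrix n n ℂ} (hM : M.PosSemidef) : 0 ≤ M.trace.re := by
  have h : ∀ i, 0 ≤ (M i i).re := by
    intro i
    have := hM.re_dotProduct_nonneg (Pi.single i 1)
    simpa [dotProduct, mulVec, Pi.single_apply, Finset.sum_ite_eq] using this
  calc (0:ℝ) ≤ ∑ i, (M i i).re := Finset.sum_nonneg fun i _ => h i
    _ = M.trace.re := by simp [Matrix.trace, Matrix.diag, Complex.re_sum]

private lemma POM_trace_mul_re_nonneg {X Y : Matrix n n ℂ} (hX : X.PosSemidef)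
    (hY : Y.PosSemidef) : 0 ≤ ((X * Y).trace).re := by
  obtain ⟨B, rfl⟩ : ∃ B : Matrix n n ℂ, X = Bᴴ * B := by
    open scoped MatrixOrder in
    exact ⟨CFC.sqrt X, by
      rw [← Matrix.star_eq_conjTranspose, (CFC.sqrt_nonneg X).isSelfAdjoint.star_eq,
        CFC.sqrt_mul_sqrt_self X (Matrix.nonneg_iff_posSemidef.mpr hX)]⟩
  rw [Matrix.mul_assoc, Matrix.trace_mul_comm]
  exact POM_trace_re_nonneg (hY.mul_mul_conjTranspose_same B)

private lemma POM_sum_four (f : (Fin 2 → ZMod 2) → ℂ) :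
    ∑ x, f x = f ![0,0] + f ![0,1] + f ![1,0] + f ![1,1] := by
  have h : (Finset.univ : Finset (Fin 2 → ZMod 2)) = {![0,0], ![0,1], ![1,0], ![1,1]} := by decide
  rw [h, Finset.sum_insert (by decide), Finset.sum_insert (by decide),
    Finset.sum_insert (by decide), Finset.sum_singleton]
  ring

private lemma POM_expand1 (R W : Matrix n n ℂ) (hR : R.trace = 1) (c : ℂ) :
    (R * ((c•(1:Matrix n n ℂ) - W)*(c•(1:Matrix n n ℂ) - W))).trace
      = c*c - 2*c*(R*W).trace + (R*(W*W)).trace := by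
  have h : (c•(1:Matrix n n ℂ) - W)*(c•(1:Matrix n n ℂ) - W)
      = (c*c)•(1:Matrix n n ℂ) - (2*c)•W + W*W := by
    simp only [sub_mul, mul_sub, smul_mul_assoc, mul_smul_comm, one_mul, mul_one, smul_smul]
    module
  rw [h]
  simp only [mul_add, mul_sub, Matrix.trace_add, Matrix.trace_sub, mul_smul_comm,
    Matrix.trace_smul, mul_one, hR, smul_eq_mul]

private lemma POM_one_sub_sq_psd {E0 E1 : Matrix n n ℂ} (h0 : E0.PosSemidef)
    (h1 : E1.PosSemidef) (hsum : E0 + E1 = 1) :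
    ((1:Matrix n n ℂ) - (E0 - E1)*(E0 - E1)).PosSemidef := by
  have hE1 : E1 = 1 - E0 := eq_sub_of_add_eq' hsum
  obtain ⟨s, hsh, hss⟩ : ∃ s : Matrix n n ℂ, sᴴ = s ∧ s * s = E0 :=
    open scoped MatrixOrder in
    ⟨CFC.sqrt E0, (CFC.sqrt_nonneg E0).isSelfAdjoint,
      CFC.sqrt_mul_sqrt_self E0 (Matrix.nonneg_iff_posSemidef.mpr h0)⟩
  have key : (1:Matrix n n ℂ) - (E0 - E1)*(E0 - E1)
      = (s + s) * E1 * (s + s)ᴴ := by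
    rw [conjTranspose_add, hsh, hE1, ← hss]
    noncomm_ring
  rw [key]
  exact h1.mul_mul_conjTranspose_same _

private lemma POM_key (r00 r01 r10 r11 A0 A1 : Matrix n n ℂ)
    (h00 : r00.PosSemidef) (h01 : r01.PosSemidef) (h10 : r10.PosSemidef) (h11 : r11.PosSemidef)
    (t00 : r00.trace = 1) (t01 : r01.trace = 1) (t10 : r10.trace = 1) (t11 : r11.trace = 1)
    (hPO : r00 + r11 = r01 + r10)
    (hA0 : A0.IsHermitian) (hA1 : A1.IsHermitian)
    (hG0 : ((1:Matrix n n ℂ) - A0*A0).PosSemidef)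
    (hG1 : ((1:Matrix n n ℂ) - A1*A1).PosSemidef) :
    (((r00 - r11) * (A0 + A1)).trace + ((r10 - r01) * (A1 - A0)).trace).re
      ≤ 4 * Real.sqrt 2 := by
  set l := Real.sqrt 2 with hl
  have hl2 : l^2 = 2 := Real.sq_sqrt (by norm_num)
  have hlpos : 0 < l := Real.sqrt_pos.mpr (by norm_num)
  set c : ℂ := (l : ℂ) with hc
  set M := A0 + A1 with hM
  set N := A1 - A0 with hN
  have hMh : M.IsHermitian := hA0.add hA1
  have hNh : N.IsHermitian := hA1.sub hA0
  have herm : ∀ (W : Matrix n n ℂ), W.IsHermitian → (c•(1:Matrix n n ℂ) - W).IsHermitian := by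
    intro W hW
    have : (c•(1:Matrix n n ℂ) - W)ᴴ = c•(1:Matrix n n ℂ) - W := by
      rw [conjTranspose_sub, conjTranspose_smul, conjTranspose_one, hW.eq, hc]
      norm_num [Complex.star_def, Complex.conj_ofReal]
    exact this
  have sqpsd : ∀ (H : Matrix n n ℂ), H.IsHermitian → (H*H).PosSemidef := by
    intro H hH
    have := Matrix.posSemidef_conjTranspose_mul_self H
    rwa [hH.eq] at this
  -- nonnegative trace pieces
  have T1 := POM_trace_mul_re_nonneg h00 (sqpsd _ (herm M hMh))
  have T2 := POM_trace_mul_re_nonneg h11 (sqpsd _ (herm (-M) hMh.neg))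
  have T3 := POM_trace_mul_re_nonneg h10 (sqpsd _ (herm N hNh))
  have T4 := POM_trace_mul_re_nonneg h01 (sqpsd _ (herm (-N) hNh.neg))
  simp only [sub_neg_eq_add] at T2 T4
  have G00 := POM_trace_mul_re_nonneg h00 hG0
  have G01 := POM_trace_mul_re_nonneg h00 hG1
  have G10 := POM_trace_mul_re_nonneg h11 hG0
  have G11 := POM_trace_mul_re_nonneg h11 hG1
  -- scalar expansions
  have e1 := POM_expand1 r00 M t00 c
  have e2 := POM_expand1 r11 (-M) t11 c
  have e3 := POM_expand1 r10 N t10 c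
  have e4 := POM_expand1 r01 (-N) t01 c
  simp only [Matrix.mul_neg, Matrix.trace_neg, neg_mul, neg_mul_neg, mul_neg, neg_neg, sub_neg_eq_add] at e2 e4
  have g1 : (r00*((1:Matrix n n ℂ) - A0*A0)).trace = 1 - (r00*(A0*A0)).trace := by
    rw [mul_sub, mul_one, Matrix.trace_sub, t00]
  have g2 : (r00*((1:Matrix n n ℂ) - A1*A1)).trace = 1 - (r00*(A1*A1)).trace := by
    rw [mul_sub, mul_one, Matrix.trace_sub, t00]
  have g3 : (r11*((1:Matrix n n ℂ) - A0*A0)).trace = 1 - (r11*(A0*A0)).trace := by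
    rw [mul_sub, mul_one, Matrix.trace_sub, t11]
  have g4 : (r11*((1:Matrix n n ℂ) - A1*A1)).trace = 1 - (r11*(A1*A1)).trace := by
    rw [mul_sub, mul_one, Matrix.trace_sub, t11]
  have hpo' : (r01*(N*N)).trace + (r10*(N*N)).trace
      = (r00*(N*N)).trace + (r11*(N*N)).trace := by
    have h := congrArg (fun X => (X * (N*N)).trace) hPO
    simp only [add_mul, Matrix.trace_add] at h
    linear_combination -h
  have hMN : ∀ (R : Matrix n n ℂ), (R*(M*M)).trace + (R*(N*N)).trace
      = 2*(R*(A0*A0)).trace + 2*(R*(A1*A1)).trace := by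
    intro R
    have hmat : M*M + N*N = A0*A0 + A0*A0 + A1*A1 + A1*A1 := by
      rw [hM, hN]; noncomm_ring
    have h := congrArg (fun X => (R * X).trace) hmat
    simp only [mul_add, Matrix.trace_add] at h
    linear_combination h
  have hSdef : ((r00 - r11) * M).trace + ((r10 - r01) * N).trace
      = (r00*M).trace - (r11*M).trace + ((r10*N).trace - (r01*N).trace) := by
    rw [sub_mul, sub_mul, Matrix.trace_sub, Matrix.trace_sub]
  -- the master identity
  have hTC : (r00 * ((c•(1:Matrix n n ℂ) - M)*(c•(1:Matrix n n ℂ) - M))).trace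
      + (r11 * ((c•(1:Matrix n n ℂ) + M)*(c•(1:Matrix n n ℂ) + M))).trace
      + (r10 * ((c•(1:Matrix n n ℂ) - N)*(c•(1:Matrix n n ℂ) - N))).trace
      + (r01 * ((c•(1:Matrix n n ℂ) + N)*(c•(1:Matrix n n ℂ) + N))).trace
      + 2*(r00*((1:Matrix n n ℂ) - A0*A0)).trace + 2*(r00*((1:Matrix n n ℂ) - A1*A1)).trace
      + 2*(r11*((1:Matrix n n ℂ) - A0*A0)).trace + 2*(r11*((1:Matrix n n ℂ) - A1*A1)).trace
      = (4*c*c + 8) - 2*c*((r00*M).trace - (r11*M).trace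
          + ((r10*N).trace - (r01*N).trace)) := by
    rw [e1, e2, e3, e4, g1, g2, g3, g4]
    linear_combination hpo' + hMN r00 + hMN r11
  have hnn : 0 ≤ ((4*c*c + 8 : ℂ) - 2*c*((r00*M).trace - (r11*M).trace
      + ((r10*N).trace - (r01*N).trace))).re := by
    rw [← hTC]
    simp only [Complex.add_re]
    have h2 : ∀ z : ℂ, (2*z).re = 2*z.re := fun z => by
      simpa using Complex.re_ofReal_mul 2 z
    rw [h2, h2, h2, h2]
    linarith [T1, T2, T3, T4, G00, G01, G10, G11]
  set S : ℂ := (r00*M).trace - (r11*M).trace + ((r10*N).trace - (r01*N).trace) with hS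
  have hval : ((4*c*c + 8 : ℂ) - 2*c*S).re = 4*l^2 + 8 - 2*l*S.re := by
    rw [hc]
    simp [Complex.sub_re, Complex.add_re, Complex.mul_re, Complex.mul_im]
    ring
  rw [hval] at hnn
  rw [hSdef]
  have : S.re ≤ 4 * l := by nlinarith [hnn, hl2, hlpos, mul_pos hlpos hlpos]
  exact this

end Aux

/-- Tsirelson-type bound for quantum 2-bit parity-oblivious multiplexing: for any
d-dimensional quantum protocol — density matrices ρ_x encoding x ∈ {0,1}², and
binary-outcome POVMs {E_{y,0}, E_{y,1}} for y ∈ {1,2} — satisfying the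
parity-obliviousness constraint ρ₀₀ + ρ₁₁ = ρ₀₁ + ρ₁₀, the success probability
(1/8)∑_y ∑_x Re Tr(ρ_x E_{y,x_y}) is at most (1/2)(1 + 1/√2). -/
theorem quantum_two_bit_POM_upper_bound
    (d : ℕ) (hd : 1 ≤ d)
    (ρ : (Fin 2 → ZMod 2) → Matrix (Fin d) (Fin d) ℂ)
    (hρ_herm : ∀ x, (ρ x).IsHermitian)
    (hρ_psd : ∀ x, (ρ x).PosSemidef)
    (hρ_tr : ∀ x, (ρ x).trace = 1)
    (E : Fin 2 → ZMod 2 → Matrix (Fin d) (Fin d) ℂ)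
    (hE_herm : ∀ y b, (E y b).IsHermitian)
    (hE_psd : ∀ y b, (E y b).PosSemidef)
    (hE_sum : ∀ y, E y 0 + E y 1 = 1)
    (hPO : ρ ![0, 0] + ρ ![1, 1] = ρ ![0, 1] + ρ ![1, 0]) :
    (1 / 8 : ℝ) *
        ∑ y : Fin 2, ∑ x : Fin 2 → ZMod 2, ((ρ x * E y (x y)).trace).re
      ≤ (1 / 2) * (1 + 1 / Real.sqrt 2) := by
  -- abbreviations
  set r00 := ρ ![0,0] with hr00
  set r01 := ρ ![0,1] with hr01
  set r10 := ρ ![1,0] with hr10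
  set r11 := ρ ![1,1] with hr11
  set A0 := E 0 0 - E 0 1 with hA0
  set A1 := E 1 0 - E 1 1 with hA1
  have hkey := POM_key r00 r01 r10 r11 A0 A1
    (hρ_psd _) (hρ_psd _) (hρ_psd _) (hρ_psd _)
    (hρ_tr _) (hρ_tr _) (hρ_tr _) (hρ_tr _)
    hPO
    ((hE_herm 0 0).sub (hE_herm 0 1)) ((hE_herm 1 0).sub (hE_herm 1 1))
    (POM_one_sub_sq_psd (hE_psd 0 0) (hE_psd 0 1) (hE_sum 0))
    (POM_one_sub_sq_psd (hE_psd 1 0) (hE_psd 1 1) (hE_sum 1))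
  set S : ℂ := ((r00 - r11) * (A0 + A1)).trace + ((r10 - r01) * (A1 - A0)).trace with hS
  -- bookkeeping: the sum equals (8 + S).re / 2
  have hE1 : ∀ y, E y 1 = 1 - E y 0 := fun y => eq_sub_of_add_eq' (hE_sum y)
  have hSc : (2 : ℂ) * (∑ y : Fin 2, ∑ x : Fin 2 → ZMod 2, (ρ x * E y (x y)).trace)
      = 8 + S := by
    rw [Fin.sum_univ_two, POM_sum_four (fun x => (ρ x * E 0 (x 0)).trace),
      POM_sum_four (fun x => (ρ x * E 1 (x 1)).trace)]
    simp only [Matrix.cons_val_zero, Matrix.cons_val_one, Matrix.head_cons]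
    rw [hS, hA0, hA1]
    simp only [hE1, ← hr00, ← hr01, ← hr10, ← hr11]
    simp only [mul_sub, mul_add, sub_mul, add_mul, mul_one, one_mul,
      Matrix.trace_sub, Matrix.trace_add, hρ_tr]
    have t00 : r00.trace = 1 := hρ_tr ![0,0]
    have t01 : r01.trace = 1 := hρ_tr ![0,1]
    have t10 : r10.trace = 1 := hρ_tr ![1,0]
    have t11 : r11.trace = 1 := hρ_tr ![1,1]
    rw [t00, t01, t10, t11]
    ring
  -- convert the real sum
  have hRe : ∑ y : Fin 2, ∑ x : Fin 2 → ZMod 2, ((ρ x * E y (x y)).trace).re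
      = (∑ y : Fin 2, ∑ x : Fin 2 → ZMod 2, (ρ x * E y (x y)).trace).re := by
    rw [Complex.re_sum]
    exact Finset.sum_congr rfl fun y _ => (Complex.re_sum _ _).symm
  have hScre := congrArg Complex.re hSc
  have h2re : ∀ z : ℂ, (2*z).re = 2*z.re := fun z => by
    simpa using Complex.re_ofReal_mul 2 z
  rw [h2re] at hScre
  have h8re : ((8 : ℂ) + S).re = 8 + S.re := by simp
  rw [h8re] at hScre
  have hl2 : Real.sqrt 2 * Real.sqrt 2 = 2 := Real.mul_self_sqrt (by norm_num)
  have hlpos : 0 < Real.sqrt 2 := Real.sqrt_pos.mpr (by norm_num)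
  have hinv : (1:ℝ) / Real.sqrt 2 = Real.sqrt 2 / 2 := by
    rw [div_eq_div_iff hlpos.ne' (by norm_num : (2:ℝ) ≠ 0)]
    linarith [hl2]
  rw [hRe, hinv]
  linarith [hkey, hScre]
end
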